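/- Let f ∈ L¹(ℝ^n) and suppose there exist constants δ > 0, C₀ > 0 and α ∈ (0,1) such that ‖f(·−y) − f(·)‖_{L¹(ℝ^n)} ≤ C₀|y|^α for all |y| < δ. Then there exist constants C > 0 and ε₀ > 0 such that |𝓕(f)(ξ)| ≤ C(e^{−ε²|ξ|²/(4π)} + ε^α) for every ξ ∈ ℝ^n and every 0 < ε < ε₀. -/

import Mathlib

open MeasureTheory FourierTransform

/-!
Translating `f` by `y = ξ / (2‖ξ‖²)` shifts the phase of `x ↦ 𝐞 (-⟪x, ξ⟫)` by half a period, so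
`𝓕 f ξ = ½ ∫ 𝐞 (-⟪x, ξ⟫) (f x - f (x + y))` and `‖𝓕 f ξ‖ ≤ ½ C₀ ‖y‖ ^ α = ½ C₀ (2‖ξ‖)⁻ᵅ` once
`‖y‖ < δ`. For `ε‖ξ‖ > 1` this is at most `C₀ ε ^ α`; for `ε‖ξ‖ ≤ 1` the trivial bound
`‖𝓕 f ξ‖ ≤ ‖f‖₁` is absorbed by the Gaussian term, which is then at least `exp (-1 / (4π))`.
-/

open scoped RealInnerProductSpace

section HalfPeriod

variable {V E : Type*} [NormedAddCommGroup V] [InnerProductSpace ℝ V]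

theorem norm_halfPeriod_smul {ξ : V} (hξ : ξ ≠ 0) :
    ‖(1 / (2 * ‖ξ‖ ^ 2) : ℝ) • ξ‖ = 1 / (2 * ‖ξ‖) := by
  have : 0 < ‖ξ‖ := norm_pos_iff.mpr hξ
  rw [norm_smul, Real.norm_eq_abs, abs_of_pos (by positivity)]
  field_simp

variable [FiniteDimensional ℝ V] [MeasurableSpace V] [BorelSpace V]
  [NormedAddCommGroup E] [NormedSpace ℂ E]

theorem norm_fourier_le_half_integral_norm_sub_translate {f : V → E} (hf : Integrable f)
    {ξ : V} (hξ : ξ ≠ 0) :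
    ‖𝓕 f ξ‖ ≤ 1 / 2 * ∫ x, ‖f (x - (1 / (2 * ‖ξ‖ ^ 2) : ℝ) • ξ) - f x‖ := by
  set y : V := (1 / (2 * ‖ξ‖ ^ 2) : ℝ) • ξ
  have htranslate : ∫ x, ‖f x - f (x + y)‖ = ∫ x, ‖f (x - y) - f x‖ := by
    rw [← integral_add_right_eq_self (fun x ↦ ‖f (x - y) - f x‖) y]
    simp
  rw [Real.fourier_eq, fourierIntegral_eq_half_sub_half_period_translate hξ hf, norm_smul,
    ← htranslate]
  gcongr
  · norm_num
  · refine (norm_integral_le_integral_norm _).trans_eq ?_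
    simp only [Circle.norm_smul]
    rfl

theorem norm_fourier_le_of_integral_norm_sub_translate_le {f : V → E} (hf : Integrable f)
    {δ C₀ α : ℝ} (hC₀ : 0 ≤ C₀)
    (htrans : ∀ y : V, ‖y‖ < δ → ∫ x, ‖f (x - y) - f x‖ ≤ C₀ * ‖y‖ ^ α)
    {ξ : V} (hξ : ξ ≠ 0) (hξδ : 1 / (2 * ‖ξ‖) < δ) :
    ‖𝓕 f ξ‖ ≤ C₀ * (1 / (2 * ‖ξ‖)) ^ α := by
  have hy := norm_halfPeriod_smul hξ
  have hbound := htrans _ (hy ▸ hξδ)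
  rw [hy] at hbound
  have : 0 ≤ C₀ * (1 / (2 * ‖ξ‖)) ^ α := by positivity
  linarith [norm_fourier_le_half_integral_norm_sub_translate hf hξ]

end HalfPeriod

theorem one_le_exp_mul_exp_neg_div {t c : ℝ} (ht : t ≤ 1) (hc : 0 ≤ c) :
    1 ≤ Real.exp (1 / c) * Real.exp (-t / c) := by
  rw [← Real.exp_add, Real.one_le_exp_iff, ← add_div]
  exact div_nonneg (by linarith) hc

theorem stmt_3_general (n : ℕ) (f : EuclideanSpace ℝ (Fin n) → ℂ)
    (hf : Integrable f)
    (δ C₀ α : ℝ) (hδ : 0 < δ) (hC₀ : 0 < C₀) (hα : α ∈ Set.Ioo (0 : ℝ) 1)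
    (htrans : ∀ y : EuclideanSpace ℝ (Fin n), ‖y‖ < δ →
      (∫ x, ‖f (x - y) - f x‖) ≤ C₀ * ‖y‖ ^ α) :
    ∃ C > 0, ∃ ε₀ > 0, ∀ (ξ : EuclideanSpace ℝ (Fin n)) (ε : ℝ), 0 < ε → ε < ε₀ →
      ‖𝓕 f ξ‖ ≤ C * (Real.exp (-(ε ^ 2 * ‖ξ‖ ^ 2) / (4 * Real.pi)) + ε ^ α) := by
  set I := ∫ x, ‖f x‖
  set K := Real.exp (1 / (4 * Real.pi))
  have hI : 0 ≤ I := integral_nonneg fun x ↦ norm_nonneg _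
  have hK : 1 ≤ K := Real.one_le_exp (by positivity)
  refine ⟨(I + C₀) * K, by positivity, δ, hδ, fun ξ ε hε hεδ ↦ ?_⟩
  set G := Real.exp (-(ε ^ 2 * ‖ξ‖ ^ 2) / (4 * Real.pi))
  have hεα : 0 ≤ ε ^ α := by positivity
  rcases le_or_gt (ε * ‖ξ‖) 1 with hsmall | hlarge
  · have hKG : 1 ≤ K * G :=
      one_le_exp_mul_exp_neg_div (by rw [← mul_pow]; exact pow_le_one₀ (by positivity) hsmall)
        (by positivity)
    calc ‖𝓕 f ξ‖ ≤ I := VectorFourier.norm_fourierIntegral_le_integral_norm _ _ _ _ _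
      _ ≤ (I + C₀) * (K * G) := (le_add_of_nonneg_right hC₀.le).trans
          (le_mul_of_one_le_right (by positivity) hKG)
      _ ≤ (I + C₀) * K * (G + ε ^ α) := by rw [mul_assoc]; gcongr; linarith
  · have hξ : ξ ≠ 0 := by
      rintro rfl
      simp only [norm_zero, mul_zero] at hlarge
      linarith
    have hξε : 1 / (2 * ‖ξ‖) ≤ ε := by
      rw [div_le_iff₀ (by positivity)]; nlinarith
    calc ‖𝓕 f ξ‖ ≤ C₀ * (1 / (2 * ‖ξ‖)) ^ α :=
          norm_fourier_le_of_integral_norm_sub_translate_le hf hC₀.le htrans hξ (by linarith)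
      _ ≤ (I + C₀) * K * ε ^ α := by
          gcongr
          · exact (le_add_of_nonneg_left hI).trans (le_mul_of_one_le_right (by positivity) hK)
          · exact hα.1.le
      _ ≤ (I + C₀) * K * (G + ε ^ α) := by
          gcongr
          exact le_add_of_nonneg_left (Real.exp_nonneg _)

/-- quantitative Riemann–Lebesgue lemma. -/
theorem stmt_3 (n : ℕ) (hn : 3 ≤ n) (f : EuclideanSpace ℝ (Fin n) → ℂ)
    (hf : Integrable f)
    (δ C₀ α : ℝ) (hδ : 0 < δ) (hC₀ : 0 < C₀) (hα : α ∈ Set.Ioo (0 : ℝ) 1)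
    (htrans : ∀ y : EuclideanSpace ℝ (Fin n), ‖y‖ < δ →
      (∫ x, ‖f (x - y) - f x‖) ≤ C₀ * ‖y‖ ^ α) :
    ∃ C > 0, ∃ ε₀ > 0, ∀ (ξ : EuclideanSpace ℝ (Fin n)) (ε : ℝ), 0 < ε → ε < ε₀ →
      ‖𝓕 f ξ‖ ≤ C * (Real.exp (-(ε ^ 2 * ‖ξ‖ ^ 2) / (4 * Real.pi)) + ε ^ α) :=
  stmt_3_general n f hf δ C₀ α hδ hC₀ hα htrans
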